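/- Let F be a real polynomial of degree less than N with coefficients F_0, …, F_{N−1}, and for r ≥ 0 let α*_r F denote the remainder on dividing ∑_{k=0}^{N−1} α_{r,k}·F_k·X^{k+r} by X^N − 1. Then for every integer λ ≥ 0 and every index 0 ≤ i < N: the series ∑_{r=0}^∞ (coefficient of X^i in α*_r F) converges absolutely; the tail satisfies |∑_{r=λ}^∞ (coefficient of X^i in α*_r F)| ≤ (4/3)·2^{−λ(b−2)}·max_{0≤k<N}|F_k|; and |∑_{r=0}^{λ−1} (coefficient of X^i in α*_r F)| ≤ (4/3)·max_{0≤k<N}|F_k|. -/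

import Mathlib

open Polynomial

/-- Generalized binomial coefficient `C(x, r) = x (x-1) ⋯ (x-r+1) / r!`. -/
noncomputable def gbc (x : ℝ) (r : ℕ) : ℝ :=
  (∏ j ∈ Finset.range r, (x - j)) / (r.factorial : ℝ)

/-- `α_{0,k} = 1` and `α_{r,k} = (k/(rN)) C((k+r)/N - 1, r-1) (-2^(-b))^r` for `r ≥ 1`. -/
noncomputable def alphaC (b N r k : ℕ) : ℝ :=
  if r = 0 then 1
  else ((k : ℝ) / (r * N)) * gbc (((k : ℝ) + r) / N - 1) (r - 1) * (-(2:ℝ) ^ (-(b:ℤ))) ^ r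

/-- `α*_r F`: the remainder of `∑_{k<N} α_{r,k} F_k X^(k+r)` modulo `X^N - 1`. -/
noncomputable def astar (b N r : ℕ) (F : Polynomial ℝ) : Polynomial ℝ :=
  (∑ k ∈ Finset.range N, C (alphaC b N r k * F.coeff k) * X ^ (k + r)) %ₘ (X ^ N - 1)

/-!
Since `X ^ N ≡ 1` modulo `X ^ N - 1`, taking the remainder only rotates the coefficients
`α_{r,k} F_k` cyclically, so each coefficient of `α*_r F` is a single product `α_{r,k} F_k`
(or `0`). For `r ≥ 1` the `r - 1` factors of the binomial coefficient in `α_{r,k}` have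
absolute value at most `r - 1`, so `|α_{r,k}| ≤ (r-1)^(r-1)/(r-1)! · 2^(-rb) ≤ 4^r 2^(-rb) = q^r`
with `q = 2^(-(b-2)) ≤ 1/4`. The three claims are then the standard
estimates for a series dominated by a geometric series of ratio `q`, and `1/(1 - q) ≤ 4/3`.
-/

lemma abs_gbc_le_four_pow {x : ℝ} {r : ℕ} (hx : -1 < x) (hxr : x ≤ r) : |gbc x r| ≤ 4 ^ r := by
  have hfactor : ∀ j ∈ Finset.range r, |x - j| ≤ r := by
    intro j hj
    have hjr : (j : ℝ) + 1 ≤ r := by exact_mod_cast Finset.mem_range.mp hj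
    rw [abs_le]
    constructor <;> linarith [(j.cast_nonneg : (0 : ℝ) ≤ j)]
  have hprod : |∏ j ∈ Finset.range r, (x - j)| ≤ (r : ℝ) ^ r := by
    rw [Finset.abs_prod]
    simpa using Finset.prod_le_prod (fun j _ => abs_nonneg _) hfactor
  have hexp : Real.exp r ≤ 4 ^ r := by
    rw [← Real.exp_one_pow]
    exact pow_le_pow_left₀ (Real.exp_pos 1).le (by linarith [Real.exp_one_lt_d9]) r
  calc |gbc x r| = |∏ j ∈ Finset.range r, (x - j)| / r.factorial := by
        rw [gbc, abs_div, Nat.abs_cast]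
    _ ≤ (r : ℝ) ^ r / r.factorial := by gcongr
    _ ≤ Real.exp r := Real.pow_div_factorial_le_exp _ r.cast_nonneg r
    _ ≤ 4 ^ r := hexp

lemma abs_alphaC_le {b N r k : ℕ} (hk : k < N) :
    |alphaC b N r k| ≤ ((2 : ℝ) ^ (-((b : ℤ) - 2))) ^ r := by
  rcases Nat.eq_zero_or_pos r with rfl | hr
  · simp [alphaC]
  have hN : (0 : ℝ) < N := by exact_mod_cast Nat.zero_lt_of_lt hk
  have hr1 : (1 : ℝ) ≤ r := by exact_mod_cast hr
  have hkN : (k : ℝ) + 1 ≤ N := by exact_mod_cast hk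
  have hratio : |(k : ℝ) / (r * N)| ≤ 1 := by
    rw [abs_of_nonneg (by positivity), div_le_one (by positivity)]
    nlinarith
  have hbinom : |gbc (((k : ℝ) + r) / N - 1) (r - 1)| ≤ 4 ^ (r - 1) := by
    apply abs_gbc_le_four_pow
    · linarith [show 0 < ((k : ℝ) + r) / N by positivity]
    · rw [Nat.cast_sub hr, Nat.cast_one, sub_le_sub_iff_right, div_le_iff₀ hN]
      nlinarith
  have hfour : (2 : ℝ) ^ (-((b : ℤ) - 2)) = 4 * 2 ^ (-(b : ℤ)) := by
    rw [neg_sub, zpow_sub₀ two_ne_zero, zpow_neg]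
    norm_num [div_eq_mul_inv]
  rw [alphaC, if_neg hr.ne', abs_mul, abs_mul, abs_pow, abs_neg,
    abs_of_pos (by positivity : (0 : ℝ) < 2 ^ (-(b : ℤ))), hfour, mul_pow]
  calc |(k : ℝ) / (r * N)| * |gbc (((k : ℝ) + r) / N - 1) (r - 1)| * (2 ^ (-(b : ℤ))) ^ r
      ≤ 1 * 4 ^ (r - 1) * (2 ^ (-(b : ℤ))) ^ r := by gcongr
    _ ≤ 4 ^ r * (2 ^ (-(b : ℤ))) ^ r := by
      rw [one_mul]
      gcongr
      · norm_num
      · omega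

lemma X_pow_modByMonic_X_pow_sub_one {R : Type*} [CommRing R] [Nontrivial R] {N : ℕ}
    (hN : 0 < N) (n : ℕ) : (X ^ n : R[X]) %ₘ (X ^ N - 1) = X ^ (n % N) := by
  have hmonic : (X ^ N - 1 : R[X]).Monic := monic_X_pow_sub_C 1 hN.ne'
  have hdvd : (X ^ N - 1 : R[X]) ∣ X ^ n - X ^ (n % N) := by
    have h := sub_dvd_pow_sub_pow ((X : R[X]) ^ N) 1 (n / N)
    rw [one_pow, ← pow_mul] at h
    nth_rewrite 1 [← Nat.mod_add_div n N]
    rw [pow_add, ← mul_sub_one]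
    exact h.mul_left _
  rw [← sub_add_cancel (X ^ n) (X ^ (n % N)), add_modByMonic,
    (modByMonic_eq_zero_iff_dvd hmonic).mpr hdvd, zero_add, modByMonic_eq_self_iff hmonic,
    degree_X_pow, ← C_1, degree_X_pow_sub_C hN]
  exact_mod_cast Nat.mod_lt n hN

lemma astar_eq_sum {b N : ℕ} (hN : 0 < N) (r : ℕ) (F : ℝ[X]) :
    astar b N r F =
      ∑ k ∈ Finset.range N, C (alphaC b N r k * F.coeff k) * X ^ ((k + r) % N) := by
  simp only [astar, ← modByMonicHom_apply, map_sum, C_mul', map_smul]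
  simp only [modByMonicHom_apply, X_pow_modByMonic_X_pow_sub_one hN]

lemma abs_coeff_sum_C_mul_X_pow_add_mod_le {N r : ℕ} (c : ℕ → ℝ) {B : ℝ} (hB : 0 ≤ B)
    (hc : ∀ k < N, |c k| ≤ B) (i : ℕ) :
    |(∑ k ∈ Finset.range N, C (c k) * X ^ ((k + r) % N)).coeff i| ≤ B := by
  set S := (Finset.range N).filter fun k => i = (k + r) % N
  have hS : S.card ≤ 1 := by
    refine Finset.card_le_one.mpr fun k hk l hl => ?_
    simp only [S, Finset.mem_filter, Finset.mem_range] at hk hl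
    have hkl : k % N = l % N := Nat.ModEq.add_right_cancel' r (hk.2.symm.trans hl.2)
    rwa [Nat.mod_eq_of_lt hk.1, Nat.mod_eq_of_lt hl.1] at hkl
  have hcS : ∀ k ∈ S, |c k| ≤ B := fun k hk =>
    hc k (Finset.mem_range.mp (Finset.mem_filter.mp hk).1)
  rw [finsetSum_coeff]
  simp only [coeff_C_mul, coeff_X_pow, mul_ite, mul_one, mul_zero]
  rw [← Finset.sum_filter]
  calc |∑ k ∈ S, c k| ≤ ∑ k ∈ S, |c k| := Finset.abs_sum_le_sum_abs _ _
    _ ≤ S.card • B := Finset.sum_le_card_nsmul _ _ _ hcS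
    _ ≤ 1 • B := by gcongr
    _ = B := one_nsmul B

lemma abs_astar_coeff_le {b N : ℕ} (hN : 0 < N) {F : ℝ[X]} {M : ℝ} (hM : 0 ≤ M)
    (hF : ∀ k < N, |F.coeff k| ≤ M) (r i : ℕ) :
    |(astar b N r F).coeff i| ≤ M * ((2 : ℝ) ^ (-((b : ℤ) - 2))) ^ r := by
  rw [astar_eq_sum hN]
  refine abs_coeff_sum_C_mul_X_pow_add_mod_le _ (by positivity) (fun k hk => ?_) i
  rw [abs_mul, mul_comm M]
  exact mul_le_mul (abs_alphaC_le hk) (hF k hk) (abs_nonneg _) (by positivity)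

lemma two_zpow_neg_sub_two_le_inv_four {b : ℕ} (hb : 4 ≤ b) :
    (2 : ℝ) ^ (-((b : ℤ) - 2)) ≤ 4⁻¹ :=
  calc (2 : ℝ) ^ (-((b : ℤ) - 2)) ≤ 2 ^ (-2 : ℤ) := zpow_le_zpow_right₀ one_le_two (by omega)
    _ = 4⁻¹ := by norm_num

section GeometricDomination

variable {f : ℕ → ℝ} {M q : ℝ}

lemma summable_abs_of_abs_le_geometric (hq0 : 0 ≤ q) (hq1 : q < 1)
    (hf : ∀ r, |f r| ≤ M * q ^ r) : Summable fun r => |f r| :=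
  ((summable_geometric_of_lt_one hq0 hq1).mul_left M).of_nonneg_of_le (fun _ => abs_nonneg _) hf

lemma abs_tsum_le_of_abs_le_geometric (hq0 : 0 ≤ q) (hq1 : q < 1)
    (hf : ∀ r, |f r| ≤ M * q ^ r) : |∑' r, f r| ≤ M * (1 - q)⁻¹ := by
  have hsum := summable_abs_of_abs_le_geometric hq0 hq1 hf
  calc |∑' r, f r| ≤ ∑' r, |f r| := by simpa using norm_tsum_le_tsum_norm (f := f) (by simpa)
    _ ≤ ∑' r, M * q ^ r :=
      hsum.tsum_le_tsum hf ((summable_geometric_of_lt_one hq0 hq1).mul_left M)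
    _ = M * (1 - q)⁻¹ := by rw [tsum_mul_left, tsum_geometric_of_lt_one hq0 hq1]

lemma abs_sum_range_le_of_abs_le_geometric (hq0 : 0 ≤ q) (hq1 : q < 1)
    (hf : ∀ r, |f r| ≤ M * q ^ r) (n : ℕ) : |∑ r ∈ Finset.range n, f r| ≤ M * (1 - q)⁻¹ := by
  have hM : 0 ≤ M := by simpa using (abs_nonneg _).trans (hf 0)
  calc |∑ r ∈ Finset.range n, f r| ≤ ∑ r ∈ Finset.range n, |f r| :=
        Finset.abs_sum_le_sum_abs _ _
    _ ≤ ∑ r ∈ Finset.range n, M * q ^ r := Finset.sum_le_sum fun r _ => hf r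
    _ = M * ∑ r ∈ Finset.Ico 0 n, q ^ r := by rw [Finset.mul_sum, Finset.range_eq_Ico]
    _ ≤ M * (1 - q)⁻¹ := by
      grw [geom_sum_Ico_le_of_lt_one hq0 hq1, pow_zero, one_div]

end GeometricDomination

/-- the coefficientwise series `∑_r (α*_r F)_i` converges absolutely,
the tail from `r = λ` onwards is bounded by `(4/3) 2^(-λ(b-2)) max_k |F_k|`, and the
partial sum over `r < λ` is bounded by `(4/3) max_k |F_k|`. -/
theorem astar_series_bounds (b N : ℕ) (hb : 4 ≤ b) (hN : 3 ≤ N)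
    (F : Polynomial ℝ) (lam : ℕ) (i : ℕ) :
    Summable (fun r : ℕ => |(astar b N r F).coeff i|) ∧
    |∑' r : ℕ, (astar b N (lam + r) F).coeff i| ≤
      4 / 3 * (2:ℝ) ^ (-((lam : ℤ) * ((b : ℤ) - 2))) *
        (Finset.range N).sup' (Finset.nonempty_range_iff.mpr (by omega))
          (fun k => |F.coeff k|) ∧
    |∑ r ∈ Finset.range lam, (astar b N r F).coeff i| ≤
      4 / 3 *
        (Finset.range N).sup' (Finset.nonempty_range_iff.mpr (by omega))
          (fun k => |F.coeff k|) := by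
  set M := (Finset.range N).sup' (Finset.nonempty_range_iff.mpr (by omega)) fun k => |F.coeff k|
  set q : ℝ := 2 ^ (-((b : ℤ) - 2)) with hq_def
  have hF : ∀ k < N, |F.coeff k| ≤ M := fun k hk =>
    Finset.le_sup' (fun k => |F.coeff k|) (Finset.mem_range.mpr hk)
  have hM : 0 ≤ M := (abs_nonneg _).trans (hF 0 (by omega))
  have hq0 : 0 ≤ q := by positivity
  have hq : q ≤ 4⁻¹ := two_zpow_neg_sub_two_le_inv_four hb
  have hq1 : q < 1 := by linarith
  have hgeom : (1 - q)⁻¹ ≤ 4 / 3 := by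
    rw [inv_le_comm₀ (by linarith) (by norm_num)]
    linarith
  have hbound : ∀ r, |(astar b N r F).coeff i| ≤ M * q ^ r :=
    fun r => abs_astar_coeff_le (by omega) hM hF r i
  have htail : ∀ r, |(astar b N (lam + r) F).coeff i| ≤ M * q ^ lam * q ^ r := fun r => by
    rw [mul_assoc, ← pow_add]
    exact hbound _
  have hq_pow : q ^ lam = 2 ^ (-((lam : ℤ) * ((b : ℤ) - 2))) := by
    rw [hq_def, ← zpow_natCast, ← zpow_mul]
    ring_nf
  refine ⟨summable_abs_of_abs_le_geometric hq0 hq1 hbound, ?_, ?_⟩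
  · calc _ ≤ M * q ^ lam * (1 - q)⁻¹ := abs_tsum_le_of_abs_le_geometric hq0 hq1 htail
      _ ≤ M * q ^ lam * (4 / 3) := by gcongr
      _ = _ := by rw [hq_pow]; ring
  · calc _ ≤ M * (1 - q)⁻¹ := abs_sum_range_le_of_abs_le_geometric hq0 hq1 hbound lam
      _ ≤ M * (4 / 3) := by gcongr
      _ = _ := by ring
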